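/- Define m(T)² = sup over unit vectors x of (‖Tx‖² - |⟨Tx, x⟩|²) (the transcendental radius squared, in Prasanna's form). Then for q ∈ [0,1], the q-numerical radius satisfies ω_q(T) ≤ q·w(T) + √(1-q²)·m(T). -/

import Mathlib

/-!
Write `y = q x + z` and `T x = ⟪x, T x⟫ x + w` with `z, w ⊥ x`. Then
`⟪T x, y⟫ = q ⟪T x, x⟫ + ⟪w, z⟫`, where `‖z‖² = 1 - q²` and `‖w‖² = ‖T x‖² - |⟪T x, x⟫|² ≤ m(T)²`,
so the Cauchy–Schwarz inequality for `⟪w, z⟫` gives the bound.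
-/

open scoped InnerProductSpace

section UnitVector

variable {𝕜 E : Type*} [RCLike 𝕜] [SeminormedAddCommGroup E] [InnerProductSpace 𝕜 E]
  {x : E}

lemma norm_sub_inner_smul_sq (hx : ‖x‖ = 1) (v : E) :
    ‖v - ⟪x, v⟫_𝕜 • x‖ ^ 2 = ‖v‖ ^ 2 - ‖⟪x, v⟫_𝕜‖ ^ 2 := by
  have hvx : RCLike.re ⟪v, ⟪x, v⟫_𝕜 • x⟫_𝕜 = ‖⟪x, v⟫_𝕜‖ ^ 2 := by
    rw [inner_smul_right, ← inner_conj_symm, RCLike.conj_mul, ← RCLike.ofReal_pow,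
      RCLike.ofReal_re, RCLike.norm_conj]
  rw [norm_sub_sq (𝕜 := 𝕜), hvx, norm_smul, hx, mul_one]
  ring

lemma inner_eq_mul_add_inner_sub_inner_smul (hx : ‖x‖ = 1) (u v : E) :
    ⟪u, v⟫_𝕜 = ⟪u, x⟫_𝕜 * ⟪x, v⟫_𝕜 + ⟪u - ⟪x, u⟫_𝕜 • x, v - ⟪x, v⟫_𝕜 • x⟫_𝕜 := by
  have hxx : ⟪x, x⟫_𝕜 = 1 := by simp [inner_self_eq_norm_sq_to_K, hx]
  simp only [inner_sub_left, inner_sub_right, inner_smul_left, inner_smul_right,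
    inner_conj_symm, hxx]
  ring

theorem norm_inner_le_of_norm_eq_one (hx : ‖x‖ = 1) (u v : E) :
    ‖⟪u, v⟫_𝕜‖ ≤ ‖⟪u, x⟫_𝕜‖ * ‖⟪x, v⟫_𝕜‖ +
      √(‖u‖ ^ 2 - ‖⟪u, x⟫_𝕜‖ ^ 2) * √(‖v‖ ^ 2 - ‖⟪x, v⟫_𝕜‖ ^ 2) := by
  rw [norm_inner_symm u x, ← norm_sub_inner_smul_sq hx, ← norm_sub_inner_smul_sq hx,
    Real.sqrt_sq (norm_nonneg _), Real.sqrt_sq (norm_nonneg _), ← norm_inner_symm u x,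
    inner_eq_mul_add_inner_sub_inner_smul hx u v, ← norm_mul]
  exact (norm_add_le _ _).trans (add_le_add le_rfl (norm_inner_le_norm _ _))

end UnitVector

namespace ContinuousLinearMap

variable {𝕜 E : Type*} [RCLike 𝕜] [SeminormedAddCommGroup E] [InnerProductSpace 𝕜 E]
  (T : E →L[𝕜] E)

lemma bddAbove_norm_inner_apply_self :
    BddAbove {r : ℝ | ∃ x : E, ‖x‖ = 1 ∧ r = ‖⟪T x, x⟫_𝕜‖} := by
  refine ⟨‖T‖, ?_⟩
  rintro r ⟨x, hx, rfl⟩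
  calc ‖⟪T x, x⟫_𝕜‖ ≤ ‖T x‖ * ‖x‖ := norm_inner_le_norm _ _
    _ ≤ ‖T‖ := by simpa [hx] using T.le_opNorm x

lemma bddAbove_norm_apply_sq_sub_norm_inner_sq :
    BddAbove {r : ℝ | ∃ x : E, ‖x‖ = 1 ∧ r = ‖T x‖ ^ 2 - ‖⟪T x, x⟫_𝕜‖ ^ 2} := by
  refine ⟨‖T‖ ^ 2, ?_⟩
  rintro r ⟨x, hx, rfl⟩
  have hTx : ‖T x‖ ≤ ‖T‖ := by simpa [hx] using T.le_opNorm x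
  nlinarith [norm_nonneg (T x), sq_nonneg ‖⟪T x, x⟫_𝕜‖]

end ContinuousLinearMap

theorem stmt_6_general {H : Type*} [NormedAddCommGroup H] [InnerProductSpace ℂ H]
    (T : H →L[ℂ] H) (q : ℝ) (hq0 : 0 ≤ q) :
    sSup {r : ℝ | ∃ x y : H, ‖x‖ = 1 ∧ ‖y‖ = 1 ∧ (inner ℂ x y : ℂ) = (q : ℂ) ∧
        r = ‖(inner ℂ (T x) y : ℂ)‖} ≤
      q * sSup {r : ℝ | ∃ x : H, ‖x‖ = 1 ∧ r = ‖(inner ℂ (T x) x : ℂ)‖} +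
        Real.sqrt (1 - q ^ 2) *
          Real.sqrt (sSup {r : ℝ | ∃ x : H, ‖x‖ = 1 ∧
            r = ‖T x‖ ^ 2 - ‖(inner ℂ (T x) x : ℂ)‖ ^ 2}) := by
  have hw0 : 0 ≤ sSup {r : ℝ | ∃ x : H, ‖x‖ = 1 ∧ r = ‖(inner ℂ (T x) x : ℂ)‖} :=
    Real.sSup_nonneg (by rintro _ ⟨x, -, rfl⟩; exact norm_nonneg _)
  refine Real.sSup_le ?_ (by positivity)
  rintro r ⟨x, y, hx, hy, hxy, rfl⟩
  calc ‖⟪T x, y⟫_ℂ‖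
      ≤ ‖⟪T x, x⟫_ℂ‖ * ‖⟪x, y⟫_ℂ‖ +
          √(‖T x‖ ^ 2 - ‖⟪T x, x⟫_ℂ‖ ^ 2) * √(‖y‖ ^ 2 - ‖⟪x, y⟫_ℂ‖ ^ 2) :=
        norm_inner_le_of_norm_eq_one hx _ _
    _ = q * ‖⟪T x, x⟫_ℂ‖ + √(1 - q ^ 2) * √(‖T x‖ ^ 2 - ‖⟪T x, x⟫_ℂ‖ ^ 2) := by
        rw [hxy, hy, Complex.norm_of_nonneg hq0, one_pow]
        ring
    _ ≤ _ := by
        gcongr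
        · exact le_csSup T.bddAbove_norm_inner_apply_self ⟨x, hx, rfl⟩
        · exact le_csSup T.bddAbove_norm_apply_sq_sub_norm_inner_sq ⟨x, hx, rfl⟩

theorem stmt_6 {H : Type*} [NormedAddCommGroup H] [InnerProductSpace ℂ H] [CompleteSpace H]
    (hdim : 2 ≤ Module.rank ℂ H)
    (T : H →L[ℂ] H) (q : ℝ) (hq0 : 0 ≤ q) (hq1 : q ≤ 1) :
    sSup {r : ℝ | ∃ x y : H, ‖x‖ = 1 ∧ ‖y‖ = 1 ∧ (inner ℂ x y : ℂ) = (q : ℂ) ∧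
        r = ‖(inner ℂ (T x) y : ℂ)‖} ≤
      q * sSup {r : ℝ | ∃ x : H, ‖x‖ = 1 ∧ r = ‖(inner ℂ (T x) x : ℂ)‖} +
        Real.sqrt (1 - q ^ 2) *
          Real.sqrt (sSup {r : ℝ | ∃ x : H, ‖x‖ = 1 ∧
            r = ‖T x‖ ^ 2 - ‖(inner ℂ (T x) x : ℂ)‖ ^ 2}) :=
  stmt_6_general T q hq0
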